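/- Let p ≥ 1, let Ā_1,…,Ā_p be continuous multilinear maps on ℝ^n (Ā_i being i-multilinear) with ‖Ā_i‖ ≤ L̄ for all i, where L̄ ≥ 1, let 0 < σ_min ≤ σ, and suppose s ∈ ℝ^n satisfies (σ / (p+1)!) ‖s‖^{p+1} < ΔT̄_p(s), where ΔT̄_p(s) = −∑_{i=1}^p Ā_i[s]^i / i!. Then ‖s‖ ≤ max( 2 L̄ (p+1)! / σ_min , (2 L̄ (p+1)! / σ_min)^{1/p} ). -/

import Mathlib

/-!
Each term of the decrement is at most `L̄ ‖s‖^i / i!`, and `‖s‖^i ≤ max(‖s‖, ‖s‖^p)` for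
`1 ≤ i ≤ p`; since `∑_{i ≥ 1} 1/i! ≤ 2`, the hypothesis gives
`‖s‖^{p+1} < C max(‖s‖, ‖s‖^p)` with `C = 2 L̄ (p+1)!/σ_min`. Dividing by `‖s‖` when `‖s‖ ≤ 1`,
and by `‖s‖^p` when `‖s‖ ≥ 1`, yields `‖s‖^p < C`, respectively `‖s‖ < C`.
-/

open Finset

/-- The inexact Taylor decrement of degree `p` built from the
`i`-multilinear maps `A i` (the inexact `i`-th derivatives), evaluated at `s`:
`ΔT̄_p(s) = −∑_{i=1}^p Ā_i[s]^i / i!`. -/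
noncomputable def taylorDecrement (n p : ℕ)
    (A : ∀ i : ℕ, ContinuousMultilinearMap ℝ
      (fun _ : Fin i => EuclideanSpace ℝ (Fin n)) ℝ)
    (s : EuclideanSpace ℝ (Fin n)) : ℝ :=
  -∑ i ∈ Finset.Icc 1 p, (A i fun _ => s) / (i.factorial : ℝ)

lemma sum_Icc_inv_factorial_le_two (p : ℕ) :
    ∑ i ∈ Icc 1 p, (i.factorial : ℝ)⁻¹ ≤ 2 := by
  have h := Complex.sum_div_factorial_le (α := ℝ) 1 (p + 1) one_pos
  have hIcc : {i ∈ range (p + 1) | 1 ≤ i} = Icc 1 p := by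
    ext i
    simp only [mem_filter, mem_range, mem_Icc]
    omega
  norm_num [hIcc] at h
  exact h

lemma pow_le_max_self_pow {t : ℝ} (ht : 0 ≤ t) {i p : ℕ} (hi : 1 ≤ i) (hip : i ≤ p) :
    t ^ i ≤ max t (t ^ p) := by
  rcases le_total t 1 with h | h
  · exact le_max_of_le_left (by simpa using pow_le_pow_of_le_one ht h hi)
  · exact le_max_of_le_right (pow_le_pow_right₀ h hip)

lemma taylorDecrement_le {n p : ℕ}
    {A : ∀ i : ℕ, ContinuousMultilinearMap ℝ (fun _ : Fin i => EuclideanSpace ℝ (Fin n)) ℝ}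
    {L : ℝ} (hL : 0 ≤ L) (hA : ∀ i ∈ Icc 1 p, ‖A i‖ ≤ L) (s : EuclideanSpace ℝ (Fin n)) :
    taylorDecrement n p A s ≤ 2 * L * max ‖s‖ (‖s‖ ^ p) := by
  set M := max ‖s‖ (‖s‖ ^ p)
  have hterm : ∀ i ∈ Icc 1 p,
      -((A i fun _ => s) / i.factorial) ≤ L * M * ((i.factorial : ℝ)⁻¹) := by
    intro i hi
    obtain ⟨hi1, hip⟩ := mem_Icc.mp hi
    have habs : |A i fun _ => s| ≤ L * M :=
      calc |A i fun _ => s| ≤ L * ‖s‖ ^ i := by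
            simpa using (A i).le_of_opNorm_le (hA i hi) (fun _ => s)
        _ ≤ L * M := by gcongr; exact pow_le_max_self_pow (norm_nonneg s) hi1 hip
    rw [← neg_div, div_eq_mul_inv]
    gcongr
    exact (neg_le_abs _).trans habs
  calc taylorDecrement n p A s = ∑ i ∈ Icc 1 p, -((A i fun _ => s) / i.factorial) := by
        rw [taylorDecrement, sum_neg_distrib]
    _ ≤ ∑ i ∈ Icc 1 p, L * M * ((i.factorial : ℝ)⁻¹) := sum_le_sum hterm
    _ = L * M * ∑ i ∈ Icc 1 p, (i.factorial : ℝ)⁻¹ := by rw [mul_sum]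
    _ ≤ L * M * 2 := by gcongr; exact sum_Icc_inv_factorial_le_two p
    _ = 2 * L * M := by ring

lemma le_max_rpow_of_pow_succ_lt_mul_max {p : ℕ} (hp : 1 ≤ p) {t C : ℝ} (ht : 0 ≤ t)
    (h : t ^ (p + 1) < C * max t (t ^ p)) : t ≤ max C (C ^ ((1 : ℝ) / p)) := by
  have ht0 : 0 < t := ht.lt_of_ne' <| by
    rintro rfl
    simp [zero_pow (by omega : p ≠ 0)] at h
  rcases le_total t 1 with h1 | h1
  · rw [max_eq_left (by simpa using pow_le_pow_of_le_one ht h1 hp), pow_succ] at h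
    have htp : t ^ p < C := lt_of_mul_lt_mul_right h ht
    calc t = (t ^ p) ^ ((1 : ℝ) / p) := by
          rw [one_div, Real.pow_rpow_inv_natCast ht (by omega)]
      _ ≤ C ^ ((1 : ℝ) / p) := Real.rpow_le_rpow (by positivity) htp.le (by positivity)
      _ ≤ _ := le_max_right _ _
  · rw [max_eq_right (by simpa using pow_le_pow_right₀ h1 hp), pow_succ'] at h
    exact le_max_of_le_left (lt_of_mul_lt_mul_right h (by positivity)).le

theorem step_norm_upper_bound_general (n p : ℕ) (hp : 1 ≤ p)
    (Abar : ∀ i : ℕ, ContinuousMultilinearMap ℝ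
      (fun _ : Fin i => EuclideanSpace ℝ (Fin n)) ℝ)
    (Lbar : ℝ)
    (hbd : ∀ i ∈ Finset.Icc 1 p, ‖Abar i‖ ≤ Lbar)
    (σ σmin : ℝ) (hσmin : 0 < σmin) (hσ : σmin ≤ σ)
    (s : EuclideanSpace ℝ (Fin n))
    (hs : σ / ((p + 1).factorial : ℝ) * ‖s‖ ^ (p + 1) <
      taylorDecrement n p Abar s) :
    ‖s‖ ≤ max (2 * Lbar * ((p + 1).factorial : ℝ) / σmin)
      ((2 * Lbar * ((p + 1).factorial : ℝ) / σmin) ^ ((1 : ℝ) / p)) := by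
  have hL : 0 ≤ Lbar := (norm_nonneg _).trans (hbd 1 (by simpa using hp))
  have hdec := taylorDecrement_le hL hbd s
  refine le_max_rpow_of_pow_succ_lt_mul_max hp (norm_nonneg s) ?_
  have hfac : (0 : ℝ) < (p + 1).factorial := by positivity
  calc ‖s‖ ^ (p + 1) ≤ σ / σmin * ‖s‖ ^ (p + 1) :=
        le_mul_of_one_le_left (by positivity) ((one_le_div hσmin).mpr hσ)
    _ = (p + 1).factorial / σmin * (σ / (p + 1).factorial * ‖s‖ ^ (p + 1)) := by
        field_simp
    _ < (p + 1).factorial / σmin * (2 * Lbar * max ‖s‖ (‖s‖ ^ p)) := by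
        exact mul_lt_mul_of_pos_left (hs.trans_le hdec) (by positivity)
    _ = _ := by ring

/-- Upper bound on the step: if `‖Ā_i‖ ≤ L̄` for all `i`,
`0 < σ_min ≤ σ`, and `(σ/(p+1)!) ‖s‖^{p+1} < ΔT̄_p(s)`, then
`‖s‖ ≤ max(2 L̄ (p+1)!/σ_min, (2 L̄ (p+1)!/σ_min)^{1/p})`. -/
theorem step_norm_upper_bound (n p : ℕ) (hp : 1 ≤ p)
    (Abar : ∀ i : ℕ, ContinuousMultilinearMap ℝ
      (fun _ : Fin i => EuclideanSpace ℝ (Fin n)) ℝ)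
    (Lbar : ℝ) (hLbar : 1 ≤ Lbar)
    (hbd : ∀ i ∈ Finset.Icc 1 p, ‖Abar i‖ ≤ Lbar)
    (σ σmin : ℝ) (hσmin : 0 < σmin) (hσ : σmin ≤ σ)
    (s : EuclideanSpace ℝ (Fin n))
    (hs : σ / ((p + 1).factorial : ℝ) * ‖s‖ ^ (p + 1) <
      taylorDecrement n p Abar s) :
    ‖s‖ ≤ max (2 * Lbar * ((p + 1).factorial : ℝ) / σmin)
      ((2 * Lbar * ((p + 1).factorial : ℝ) / σmin) ^ ((1 : ℝ) / p)) :=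
  step_norm_upper_bound_general n p hp Abar Lbar hbd σ σmin hσmin hσ s hs
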